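/- Suppose v: ℝ → ℝ satisfies v'(x) = −[φ₀'(x)]^{−2} ∫_{−∞}^x [φ₀'(s)]² ds with φ₀ the Maxwell front. Then v'(x) ~ −(1/(2√2)) e^{2√2x/3} as x → +∞, and consequently w₁ = v·φ₀' satisfies w₁(x) ~ −(1/(6√2)) e^{√2x/3} as x → +∞. -/

import Mathlib

/-!
Write `a = √2 / 3` and `t = exp (a x)`, so that `φ₀ = (2/3) / (1 + 1/t)` and
`φ₀' = (2a/3) t / (1 + t)²`. Under `dx = dt / (a t)` the energy `∫_{-∞}^x φ₀'²` becomes a rational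
integral in `t` with the closed form `(2a/27) t² (t + 3) / (1 + t)³`, so the defining relation gives
exactly `v' = -(t + 1)(t + 3) / (6a)`. Hence `v` is an explicit combination of `t²`, `t` and `x`
up to an additive constant, `v ~ -t² / (12a²)`, and with `φ₀' ~ (2a/3) / t` both asymptotics follow.
-/

open Filter MeasureTheory Real Set Topology

theorem integral_Iic_of_hasDerivAt_of_nonneg {g g' : ℝ → ℝ} {a m : ℝ}
    (hderiv : ∀ x ∈ Iic a, HasDerivAt g (g' x) x) (hcont : ContinuousOn g' (Iic a))
    (g'pos : ∀ x ∈ Iic a, 0 ≤ g' x) (hg : Tendsto g atBot (𝓝 m)) :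
    ∫ x in Iic a, g' x = g a - m := by
  refine integral_Iic_of_hasDerivAt_of_tendsto' hderiv ?_ hg
  refine integrableOn_Iic_of_intervalIntegral_norm_tendsto (g a - m) a
    (fun y => ((hcont.mono Icc_subset_Iic_self).integrableOn_Icc).mono_set Ioc_subset_Icc_self)
    tendsto_id ?_
  refine ((tendsto_const_nhds (x := g a)).sub hg).congr' ?_
  filter_upwards [eventually_le_atBot a] with y hy
  have hsub : uIcc y a ⊆ Iic a := by rw [uIcc_of_le hy]; exact Icc_subset_Iic_self
  rw [← intervalIntegral.integral_eq_sub_of_hasDerivAt (fun x hx => hderiv x (hsub hx))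
    ((hcont.mono hsub).intervalIntegrable)]
  refine intervalIntegral.integral_congr fun x hx => ?_
  exact (Real.norm_of_nonneg (g'pos x (hsub hx))).symm

theorem hasDerivAt_exp_mul (a x : ℝ) : HasDerivAt (fun x => exp (a * x)) (a * exp (a * x)) x := by
  simpa [mul_comm] using ((hasDerivAt_id x).const_mul a).exp

theorem exp_two_mul_mul (a x : ℝ) : exp (2 * a * x) = exp (a * x) ^ 2 := by
  rw [sq, ← exp_add]; ring_nf

theorem tendsto_exp_neg_mul_atTop_nhds_zero {a : ℝ} (ha : 0 < a) :
    Tendsto (fun x => exp (-(a * x))) atTop (𝓝 0) :=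
  tendsto_exp_atBot.comp (tendsto_neg_atTop_atBot.comp (tendsto_id.const_mul_atTop ha))

namespace LogisticFront

noncomputable def frontDeriv (a c x : ℝ) : ℝ := c * a * exp (a * x) / (1 + exp (a * x)) ^ 2

noncomputable def frontEnergy (a c x : ℝ) : ℝ :=
  c ^ 2 * a / 6 * exp (a * x) ^ 2 * (exp (a * x) + 3) / (1 + exp (a * x)) ^ 3

noncomputable def vDeriv (a x : ℝ) : ℝ := -(exp (a * x) + 1) * (exp (a * x) + 3) / (6 * a)

noncomputable def vPrimitive (a x : ℝ) : ℝ :=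
  -(exp (a * x) ^ 2 / (2 * a) + 4 * exp (a * x) / a + 3 * x) / (6 * a)

variable {a : ℝ}

theorem hasDerivAt_front (a c x : ℝ) :
    HasDerivAt (fun x => c / (1 + exp (-(a * x)))) (frontDeriv a c x) x := by
  have hden : HasDerivAt (fun x => 1 + exp (-(a * x))) (-(a * exp (-(a * x)))) x := by
    simpa using (hasDerivAt_exp_mul (-a) x).const_add 1
  refine ((hasDerivAt_const x c).div hden (by positivity)).congr_deriv ?_
  simp only [frontDeriv, exp_neg]
  field_simp
  ring

theorem hasDerivAt_frontEnergy (a c x : ℝ) :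
    HasDerivAt (frontEnergy a c) (frontDeriv a c x ^ 2) x := by
  have ht := hasDerivAt_exp_mul a x
  refine ((((ht.fun_pow 2).const_mul (c ^ 2 * a / 6)).fun_mul (ht.add_const 3)).fun_div
    ((ht.const_add 1).fun_pow 3) (by positivity)).congr_deriv ?_
  simp only [frontDeriv]
  field_simp
  ring

theorem tendsto_frontEnergy_atBot (ha : 0 < a) (c : ℝ) :
    Tendsto (frontEnergy a c) atBot (𝓝 0) := by
  have hF : ContinuousAt (fun t : ℝ => c ^ 2 * a / 6 * t ^ 2 * (t + 3) / (1 + t) ^ 3) 0 := by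
    fun_prop (disch := norm_num)
  convert hF.tendsto.comp (tendsto_exp_atBot.comp (tendsto_id.const_mul_atBot ha)) using 2
  · rfl
  · simp

theorem continuous_frontDeriv (a c : ℝ) : Continuous (frontDeriv a c) :=
  Continuous.div (by fun_prop) (by fun_prop) fun x => by positivity

theorem integral_Iic_sq_frontDeriv (ha : 0 < a) (c x : ℝ) :
    ∫ s in Iic x, frontDeriv a c s ^ 2 = frontEnergy a c x := by
  rw [integral_Iic_of_hasDerivAt_of_nonneg (fun s _ => hasDerivAt_frontEnergy a c s)
    ((continuous_frontDeriv a c).pow 2).continuousOn (fun s _ => sq_nonneg _)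
    (tendsto_frontEnergy_atBot ha c), sub_zero]

theorem neg_inv_sq_frontDeriv_mul_frontEnergy (ha : a ≠ 0) {c : ℝ} (hc : c ≠ 0) (x : ℝ) :
    -(frontDeriv a c x ^ 2)⁻¹ * frontEnergy a c x = vDeriv a x := by
  unfold frontDeriv frontEnergy vDeriv
  field_simp
  ring

theorem vDeriv_neg (ha : 0 < a) (x : ℝ) : vDeriv a x < 0 := by
  rw [vDeriv, neg_mul]
  exact div_neg_of_neg_of_pos (neg_neg_of_pos (by positivity)) (by positivity)

theorem hasDerivAt_vPrimitive (ha : a ≠ 0) (x : ℝ) : HasDerivAt (vPrimitive a) (vDeriv a x) x := by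
  have ht := hasDerivAt_exp_mul a x
  refine (((((ht.fun_pow 2).div_const (2 * a)).add ((ht.const_mul 4).div_const a)).add
    ((hasDerivAt_id x).const_mul 3)).neg.div_const (6 * a)).congr_deriv ?_
  simp only [vDeriv]
  field_simp
  ring

theorem exists_eq_vPrimitive_add {v : ℝ → ℝ} (ha : 0 < a) (hv : ∀ x, deriv v x = vDeriv a x) :
    ∃ C, ∀ x, v x = vPrimitive a x + C := by
  have hdiff : Differentiable ℝ v := fun x =>
    differentiableAt_of_deriv_ne_zero ((hv x).trans_ne (vDeriv_neg ha x).ne)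
  obtain ⟨C, hC⟩ := isOpen_univ.exists_eq_add_of_deriv_eq isPreconnected_univ
    hdiff.differentiableOn
    (fun x _ => (hasDerivAt_vPrimitive ha.ne' x).differentiableAt.differentiableWithinAt)
    (fun x _ => (hv x).trans (hasDerivAt_vPrimitive ha.ne' x).deriv.symm)
  exact ⟨C, fun x => hC (mem_univ x)⟩

theorem tendsto_vDeriv_div_exp (ha : 0 < a) :
    Tendsto (fun x => vDeriv a x / exp (2 * a * x)) atTop (𝓝 (-1 / (6 * a))) := by
  have hF : ContinuousAt (fun s : ℝ => -(1 + s) * (1 + 3 * s) / (6 * a)) 0 := by fun_prop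
  convert hF.tendsto.comp (tendsto_exp_neg_mul_atTop_nhds_zero ha) using 1
  · ext x
    simp only [Function.comp_apply, vDeriv, exp_neg, exp_two_mul_mul]
    field_simp
  · norm_num

theorem tendsto_vPrimitive_add_div_exp (ha : 0 < a) (C : ℝ) :
    Tendsto (fun x => (vPrimitive a x + C) / exp (2 * a * x)) atTop (𝓝 (-1 / (12 * a ^ 2))) := by
  have hF : ContinuousAt (fun s : ℝ => -(1 / (2 * a) + 4 * s / a) / (6 * a)) 0 := by fun_prop
  have hlin : Tendsto (fun x : ℝ => (C - x / (2 * a)) * exp (-(2 * a) * x)) atTop (𝓝 0) := by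
    have h0 := tendsto_rpow_mul_exp_neg_mul_atTop_nhds_zero 0 (2 * a) (by positivity)
    have h1 := tendsto_rpow_mul_exp_neg_mul_atTop_nhds_zero 1 (2 * a) (by positivity)
    convert (h0.const_mul C).sub (h1.const_mul (1 / (2 * a))) using 1
    · ext x; simp only [rpow_zero, rpow_one]; ring
    · simp
  convert (hF.tendsto.comp (tendsto_exp_neg_mul_atTop_nhds_zero ha)).add hlin using 1
  · ext x
    have h2 : exp (-(2 * a) * x) = (exp (a * x) ^ 2)⁻¹ := by
      rw [neg_mul, exp_neg, exp_two_mul_mul]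
    simp only [Function.comp_apply, vPrimitive, exp_neg, exp_two_mul_mul, h2]
    field_simp
    ring
  · congr 1
    field_simp
    ring

theorem tendsto_frontDeriv_mul_exp (ha : 0 < a) (c : ℝ) :
    Tendsto (fun x => frontDeriv a c x * exp (a * x)) atTop (𝓝 (c * a)) := by
  have hF : ContinuousAt (fun s : ℝ => c * a / (1 + s) ^ 2) 0 := by fun_prop (disch := norm_num)
  convert hF.tendsto.comp (tendsto_exp_neg_mul_atTop_nhds_zero ha) using 1
  · ext x
    simp only [Function.comp_apply, frontDeriv, exp_neg]
    field_simp
    ring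
  · simp

theorem tendsto_mul_frontDeriv_div_exp {v : ℝ → ℝ} (ha : 0 < a)
    (hv : ∀ x, deriv v x = vDeriv a x) (c : ℝ) :
    Tendsto (fun x => v x * frontDeriv a c x / exp (a * x)) atTop (𝓝 (-c / (12 * a))) := by
  obtain ⟨C, hC⟩ := exists_eq_vPrimitive_add ha hv
  convert (tendsto_vPrimitive_add_div_exp ha C).mul (tendsto_frontDeriv_mul_exp ha c) using 1
  · ext x
    rw [hC, exp_two_mul_mul]
    field_simp
  · congr 1
    field_simp

end LogisticFront

open LogisticFront

/-- if `v'(x) = −[φ₀'(x)]⁻² ∫_{−∞}^x [φ₀'(s)]² ds` with `φ₀` the Maxwell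
front, then `v'(x) ~ −(1/(2√2)) e^{2√2x/3}` as `x → +∞`, and consequently
`w₁ = v·φ₀'` satisfies `w₁(x) ~ −(1/(6√2)) e^{√2x/3}` as `x → +∞`. -/
theorem v_far_field (φ₀ v : ℝ → ℝ)
    (hφ₀ : ∀ x, φ₀ x = (2/3) / (1 + Real.exp (-(Real.sqrt 2) * x / 3)))
    (hv : ∀ x, deriv v x
      = -((deriv φ₀ x) ^ 2)⁻¹ * ∫ s in Set.Iic x, (deriv φ₀ s) ^ 2) :
    Tendsto (fun x => deriv v x / Real.exp (2 * Real.sqrt 2 * x / 3)) atTop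
      (nhds (-(1 / (2 * Real.sqrt 2)))) ∧
    Tendsto (fun x => v x * deriv φ₀ x / Real.exp (Real.sqrt 2 * x / 3)) atTop
      (nhds (-(1 / (6 * Real.sqrt 2)))) := by
  set a := √2 / 3 with ha_def
  have ha : 0 < a := by positivity
  have hφ₀' : ∀ x, deriv φ₀ x = frontDeriv a (2 / 3) x := by
    have : φ₀ = fun x => 2 / 3 / (1 + exp (-(a * x))) := by
      ext x; rw [hφ₀, ha_def]; ring_nf
    exact fun x => this ▸ (hasDerivAt_front a (2 / 3) x).deriv
  have hv' : ∀ x, deriv v x = vDeriv a x := fun x => by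
    simp only [hv, hφ₀', integral_Iic_sq_frontDeriv ha,
      neg_inv_sq_frontDeriv_mul_frontEnergy ha.ne' (c := 2 / 3) (by norm_num)]
  constructor
  · convert tendsto_vDeriv_div_exp ha using 1
    · ext x; rw [hv', ha_def]; ring_nf
    · rw [ha_def]; ring_nf
  · convert tendsto_mul_frontDeriv_div_exp ha hv' (2 / 3) using 1
    · ext x; rw [hφ₀', ha_def]; ring_nf
    · rw [ha_def]; ring_nf
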